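/- Let n ≥ 3, let D be any orientation of the cycle C_n whose vertices are labelled bijectively by v_1, …, v_n, and let s_k be a predator-prey strategy on D with residual population r_{s_k}(D). Let D' be obtained from D by squeezing a new vertex v_{n+1} (with initial population n+1) in between two adjacent vertices v_p and v_q of the cycle: the arc between v_p and v_q is replaced by two new arcs, one joining v_p and v_{n+1} and one joining v_{n+1} and v_q, each oriented in either direction. Then there is a predator-prey strategy s*_k on D' (the minimal deviation of s_k accommodating v_{n+1}) whose residual population equals r_{s_k}(D) + (n−1). -/

import Mathlib

/-- A state of the Grog algorithm: a finite set of remaining arcs (on vertices `v_1, v_2, …`,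
identified with positive naturals) together with the current population of every vertex. -/
structure PPState where
  arcs : Finset (ℕ × ℕ)
  pop : ℕ → ℕ

/-- One predation step along the arc `a = (u, w)`: the arc is deleted and the populations
of `u` and `w` each decrease by `1`. -/
def predStep (s : PPState) (a : ℕ × ℕ) : PPState :=
  ⟨s.arcs.erase a, fun v => if v = a.1 ∨ v = a.2 then s.pop v - 1 else s.pop v⟩

/-- The arc `a` may be predated along in state `s`: it is a current arc and both of its
endpoints have current population at least `1`. -/
def validArc (s : PPState) (a : ℕ × ℕ) : Prop :=
  a ∈ s.arcs ∧ 1 ≤ s.pop a.1 ∧ 1 ≤ s.pop a.2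

/-- Run a sequence of predation steps from a state. -/
def runSeq : PPState → List (ℕ × ℕ) → PPState
  | s, [] => s
  | s, a :: l => runSeq (predStep s a) l

/-- The sequence of predation steps is valid from state `s`. -/
def ValidSeq : PPState → List (ℕ × ℕ) → Prop
  | _, [] => True
  | s, a :: l => validArc s a ∧ ValidSeq (predStep s a) l

/-- No further predation step is possible. -/
def Terminal (s : PPState) : Prop := ∀ a ∈ s.arcs, ¬ validArc s a

/-- A predator-prey strategy from state `s`: a maximal valid sequence of predation steps. -/
def IsStrategy (s : PPState) (l : List (ℕ × ℕ)) : Prop :=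
  ValidSeq s l ∧ Terminal (runSeq s l)

/-- The initial state of the digraph with arc set `A`, with initial populations `ρ(v_i) = i`. -/
def initState (A : Finset (ℕ × ℕ)) : PPState := ⟨A, id⟩

/-- The (residual) population of a state, summed over the vertices `v_1, …, v_n`. -/
def resid (n : ℕ) (s : PPState) : ℕ := ∑ v ∈ Finset.Icc 1 n, s.pop v

/-- The grog number of the digraph on `v_1, …, v_n` with arc set `A`: the minimum of the
residual population over all predator-prey strategies. -/
noncomputable def grogD (n : ℕ) (A : Finset (ℕ × ℕ)) : ℕ :=
  sInf {r | ∃ l, IsStrategy (initState A) l ∧ resid n (runSeq (initState A) l) = r}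

/-- `A` is an orientation of the labelled graph obtained from the simple graph `G` via the
bijective labelling `f` of its vertices by `v_1, …, v_n`. -/
def LabelledOrientation {V : Type*} (G : SimpleGraph V) (n : ℕ) (f : V → ℕ)
    (A : Finset (ℕ × ℕ)) : Prop :=
  Function.Injective f ∧ Set.range f = ↑(Finset.Icc 1 n) ∧
  (∀ u v, G.Adj u v ↔ ((f u, f v) ∈ A ∨ (f v, f u) ∈ A)) ∧
  (∀ u v, ¬(((f u, f v) ∈ A) ∧ ((f v, f u) ∈ A))) ∧
  (∀ a ∈ A, ∃ u v, G.Adj u v ∧ a = (f u, f v))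

/-- `A` is an orientation of the path `P_n` whose vertices, in path order, are labelled
`p 0, p 1, …, p (n-1)`, where `p` is a bijection onto `{1, …, n}`. -/
def PathOrientation (n : ℕ) (p : ℕ → ℕ) (A : Finset (ℕ × ℕ)) : Prop :=
  Set.BijOn p (Set.Iio n) (Set.Icc 1 n) ∧
  (∀ i, i + 1 < n →
    (((p i, p (i+1)) ∈ A ∨ (p (i+1), p i) ∈ A) ∧
      ¬(((p i, p (i+1)) ∈ A) ∧ ((p (i+1), p i) ∈ A)))) ∧
  (∀ a ∈ A, ∃ i, i + 1 < n ∧ (a = (p i, p (i+1)) ∨ a = (p (i+1), p i)))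

/-- `A` is an orientation of the cycle `C_n` whose vertices, in cyclic order, are labelled
`p 0, p 1, …, p (n-1)`, where `p` is a bijection onto `{1, …, n}`. -/
def CycleOrientation (n : ℕ) (p : ℕ → ℕ) (A : Finset (ℕ × ℕ)) : Prop :=
  Set.BijOn p (Set.Iio n) (Set.Icc 1 n) ∧
  (∀ i < n,
    (((p i, p ((i+1) % n)) ∈ A ∨ (p ((i+1) % n), p i) ∈ A) ∧
      ¬(((p i, p ((i+1) % n)) ∈ A) ∧ ((p ((i+1) % n), p i) ∈ A)))) ∧
  (∀ a ∈ A, ∃ i < n, a = (p i, p ((i+1) % n)) ∨ a = (p ((i+1) % n), p i))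

/-!
If the arc `e` joining `v_p` and `v_q` is predated in `s_k`, predate the two new arcs at that
moment instead: every old vertex ends with the same population, and `v_{n+1}` loses exactly two
individuals.

If `e` survives, one of its endpoints is extinct at the end. A vertex of a cycle lies on only one
arc besides `e`, so it loses at most one individual; as the labels are distinct and positive, the
other endpoint is still alive, and predating once more along the new arc joining it to `v_{n+1}`
ends the strategy, at the cost of one individual of each.
-/

def Joins (a : ℕ × ℕ) (u v : ℕ) : Prop := a = (u, v) ∨ a = (v, u)

namespace Joins

variable {a : ℕ × ℕ} {u v : ℕ}

lemma incident_iff (h : Joins a u v) (w : ℕ) : (w = a.1 ∨ w = a.2) ↔ (w = u ∨ w = v) := by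
  rcases h with rfl | rfl
  · rfl
  · exact or_comm

lemma validArc_iff (h : Joins a u v) (s : PPState) :
    validArc s a ↔ a ∈ s.arcs ∧ 1 ≤ s.pop u ∧ 1 ≤ s.pop v := by
  rcases h with rfl | rfl
  · rfl
  · exact and_congr_right' and_comm

lemma mem_and_mem_iff {S : Finset ℕ} (h : Joins a u v) : a.1 ∈ S ∧ a.2 ∈ S ↔ u ∈ S ∧ v ∈ S := by
  rcases h with rfl | rfl
  · rfl
  · exact and_comm

end Joins

section Runs

variable {s t : PPState} {l : List (ℕ × ℕ)}

lemma predStep_pop (s : PPState) (a : ℕ × ℕ) (v : ℕ) :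
    (predStep s a).pop v = if v = a.1 ∨ v = a.2 then s.pop v - 1 else s.pop v := rfl

lemma predStep_pop_le (s : PPState) (a : ℕ × ℕ) (v : ℕ) : (predStep s a).pop v ≤ s.pop v := by
  rw [predStep_pop]
  split_ifs <;> omega

lemma runSeq_append (s : PPState) (l₁ l₂ : List (ℕ × ℕ)) :
    runSeq s (l₁ ++ l₂) = runSeq (runSeq s l₁) l₂ := by
  induction l₁ generalizing s with
  | nil => rfl
  | cons a l₁ ih => exact ih (predStep s a)

lemma validSeq_append (s : PPState) (l₁ l₂ : List (ℕ × ℕ)) :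
    ValidSeq s (l₁ ++ l₂) ↔ ValidSeq s l₁ ∧ ValidSeq (runSeq s l₁) l₂ := by
  induction l₁ generalizing s with
  | nil => simp [ValidSeq, runSeq]
  | cons a l₁ ih => simp [ValidSeq, runSeq, ih, and_assoc]

lemma validSeq_pair (s : PPState) (a b : ℕ × ℕ) :
    ValidSeq s [a, b] ↔ validArc s a ∧ validArc (predStep s a) b := by
  simp [ValidSeq]

lemma arcs_runSeq (s : PPState) (l : List (ℕ × ℕ)) : (runSeq s l).arcs = s.arcs \ l.toFinset := by
  induction l generalizing s with
  | nil => simp [runSeq]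
  | cons a l ih =>
    rw [runSeq, ih]
    ext b
    simp only [predStep, Finset.mem_sdiff, Finset.mem_erase, List.toFinset_cons,
      Finset.mem_insert, List.mem_toFinset]
    tauto

lemma runSeq_pop_eqOn {S : Set ℕ} (h : S.EqOn s.pop t.pop) (l : List (ℕ × ℕ)) :
    S.EqOn (runSeq s l).pop (runSeq t l).pop := by
  induction l generalizing s t with
  | nil => exact h
  | cons a l ih =>
    refine ih fun v hv => ?_
    simp only [predStep_pop, h hv]

lemma runSeq_pop_congr (h : s.pop = t.pop) (l : List (ℕ × ℕ)) :
    (runSeq s l).pop = (runSeq t l).pop :=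
  funext fun _ => runSeq_pop_eqOn (S := Set.univ) (fun v _ => congrFun h v) l trivial

lemma runSeq_pop_of_not_incident {v : ℕ} (h : ∀ a ∈ l, ¬(v = a.1 ∨ v = a.2)) :
    (runSeq s l).pop v = s.pop v := by
  induction l generalizing s with
  | nil => rfl
  | cons a l ih =>
    rw [runSeq, ih fun b hb => h b (List.mem_cons_of_mem a hb), predStep_pop,
      if_neg (h a List.mem_cons_self)]

lemma pop_runSeq_add_countP (h : ValidSeq s l) (v : ℕ) :
    (runSeq s l).pop v + l.countP (fun a => v = a.1 ∨ v = a.2) = s.pop v := by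
  induction l generalizing s with
  | nil => rfl
  | cons a l ih =>
    obtain ⟨⟨-, h₁, h₂⟩, hl⟩ := h
    have ih' := ih hl
    rw [predStep_pop] at ih'
    rw [runSeq, List.countP_cons]
    by_cases hv : v = a.1 ∨ v = a.2
    · have : 1 ≤ s.pop v := by rcases hv with rfl | rfl <;> assumption
      rw [if_pos hv] at ih'
      simp only [hv, decide_true, if_true]
      omega
    · rw [if_neg hv] at ih'
      simp only [hv, decide_false, Bool.false_eq_true, if_false]
      omega

namespace ValidSeq

lemma mem_arcs (h : ValidSeq s l) : ∀ a ∈ l, a ∈ s.arcs := by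
  induction l generalizing s with
  | nil => simp
  | cons b l ih =>
    rintro a (_ | ⟨_, ha⟩)
    · exact h.1.1
    · exact Finset.mem_of_mem_erase (ih h.2 a ha)

lemma nodup (h : ValidSeq s l) : l.Nodup := by
  induction l generalizing s with
  | nil => exact List.nodup_nil
  | cons b l ih =>
    refine List.nodup_cons.mpr ⟨fun hb => ?_, ih h.2⟩
    simpa [predStep] using h.2.mem_arcs b hb

lemma transfer {S : Set ℕ} (h : ValidSeq s l) (harcs : ∀ a ∈ l, a ∈ t.arcs)
    (hS : ∀ a ∈ l, a.1 ∈ S ∧ a.2 ∈ S) (hpop : S.EqOn s.pop t.pop) : ValidSeq t l := by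
  induction l generalizing s t with
  | nil => trivial
  | cons b l ih =>
    have hb : b ∉ l := (List.nodup_cons.mp h.nodup).1
    obtain ⟨⟨-, h₁, h₂⟩, hl⟩ := h
    have hbS := hS b List.mem_cons_self
    refine ⟨⟨harcs b List.mem_cons_self, h₁.trans_eq (hpop hbS.1), h₂.trans_eq (hpop hbS.2)⟩,
      ih hl (fun a ha => ?_) (fun a ha => hS a (List.mem_cons_of_mem b ha))
        (runSeq_pop_eqOn hpop [b])⟩
    exact Finset.mem_erase.mpr ⟨ne_of_mem_of_not_mem ha hb, harcs a (List.mem_cons_of_mem b ha)⟩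

end ValidSeq

lemma Terminal.of_eqOn {S : Set ℕ} (h : Terminal s) (harcs : ∀ a ∈ t.arcs, a ∈ s.arcs)
    (hS : ∀ a ∈ t.arcs, a.1 ∈ S ∧ a.2 ∈ S) (hpop : S.EqOn s.pop t.pop) : Terminal t := by
  rintro a ha ⟨-, h₁, h₂⟩
  exact h a (harcs a ha) ⟨harcs a ha, h₁.trans_eq (hpop (hS a ha).1).symm,
    h₂.trans_eq (hpop (hS a ha).2).symm⟩

lemma Terminal.of_le (h : Terminal s) (hpop : ∀ v, t.pop v ≤ s.pop v)
    (harcs : ∀ a ∈ t.arcs, a ∉ s.arcs → ¬validArc t a) : Terminal t := by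
  intro a ha hva
  by_cases has : a ∈ s.arcs
  · exact h a has ⟨has, hva.2.1.trans (hpop _), hva.2.2.trans (hpop _)⟩
  · exact harcs a ha has hva

end Runs

section Residual

variable {n : ℕ} {s t : PPState}

lemma resid_succ (n : ℕ) (s : PPState) : resid (n + 1) s = resid n s + s.pop (n + 1) :=
  Finset.sum_Icc_succ_top (by omega) _

lemma resid_congr (h : Set.EqOn s.pop t.pop (Finset.Icc 1 n)) : resid n s = resid n t :=
  Finset.sum_congr rfl h

lemma resid_predStep_add_one {b : ℕ × ℕ} {x w : ℕ} (hb : Joins b x w) (hx : x ∈ Finset.Icc 1 n)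
    (hw : w ∉ Finset.Icc 1 n) (hpx : 1 ≤ s.pop x) : resid n (predStep s b) + 1 = resid n s := by
  have hrest : ∑ v ∈ (Finset.Icc 1 n).erase x, (predStep s b).pop v =
      ∑ v ∈ (Finset.Icc 1 n).erase x, s.pop v := by
    refine Finset.sum_congr rfl fun v hv => ?_
    obtain ⟨hvx, hv⟩ := Finset.mem_erase.mp hv
    rw [predStep_pop, if_neg]
    rw [hb.incident_iff]
    rintro (rfl | rfl)
    exacts [hvx rfl, hw hv]
  unfold resid
  rw [← Finset.add_sum_erase _ _ hx, ← Finset.add_sum_erase _ _ hx,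
    hrest, predStep_pop, if_pos ((hb.incident_iff x).mpr (Or.inl rfl))]
  omega

end Residual

section Squeeze

variable {n w x y : ℕ} {A : Finset (ℕ × ℕ)} {a e b₁ b₂ : ℕ × ℕ} {l : List (ℕ × ℕ)}

def squeezeArcs (A : Finset (ℕ × ℕ)) (e b₁ b₂ : ℕ × ℕ) : Finset (ℕ × ℕ) :=
  insert b₁ (insert b₂ (A.erase e))

lemma mem_squeezeArcs : a ∈ squeezeArcs A e b₁ b₂ ↔ a = b₁ ∨ a = b₂ ∨ (a ≠ e ∧ a ∈ A) := by
  simp only [squeezeArcs, Finset.mem_insert, Finset.mem_erase]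

lemma Icc_subset_compl_succ (n : ℕ) : (↑(Finset.Icc 1 n) : Set ℕ) ⊆ {n + 1}ᶜ := by
  intro v hv
  simp only [Finset.coe_Icc, Set.mem_Icc] at hv
  simp only [Set.mem_compl_iff, Set.mem_singleton_iff]
  omega

lemma notMem_of_joins_succ (hA : ∀ a ∈ A, a.1 ∈ Finset.Icc 1 n ∧ a.2 ∈ Finset.Icc 1 n)
    (ha : Joins a x (n + 1)) : a ∉ A := fun h => by
  have := hA a h
  rcases ha with rfl | rfl <;> simp at this

lemma not_incident_succ_of_mem (hA : ∀ a ∈ A, a.1 ∈ Finset.Icc 1 n ∧ a.2 ∈ Finset.Icc 1 n)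
    (ha : a ∈ A) : ¬(n + 1 = a.1 ∨ n + 1 = a.2) := by
  have := hA a ha
  simp only [Finset.mem_Icc] at this
  omega

lemma predStep_predStep_pop (he : Joins e x y) (hb₁ : Joins b₁ x w) (hb₂ : Joins b₂ y w)
    (hxy : x ≠ y) (hxw : x ≠ w) (hyw : y ≠ w) (s : PPState) :
    (predStep (predStep s b₁) b₂).pop = Function.update (predStep s e).pop w (s.pop w - 2) := by
  funext v
  by_cases hv : v = w
  · subst hv
    simp only [predStep_pop, hb₁.incident_iff, hb₂.incident_iff, Function.update_self, or_true,
      ↓reduceIte]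
    omega
  · simp only [predStep_pop, he.incident_iff, hb₁.incident_iff, hb₂.incident_iff,
      Function.update_of_ne hv]
    split_ifs <;> omega

lemma runSeq_pop_squeeze (he : Joins e x y) (hb₁ : Joins b₁ x w) (hb₂ : Joins b₂ y w)
    (hxy : x ≠ y) (hxw : x ≠ w) (hyw : y ≠ w) {s t : PPState} (hst : s.pop = t.pop)
    (l : List (ℕ × ℕ)) :
    Set.EqOn (runSeq s (l ++ [e])).pop (runSeq t (l ++ [b₁, b₂])).pop {w}ᶜ := by
  intro v hv
  rw [runSeq_append, runSeq_append]
  change (predStep _ e).pop v = (predStep (predStep _ b₁) b₂).pop v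
  rw [predStep_predStep_pop he hb₁ hb₂ hxy hxw hyw, Function.update_of_ne hv, predStep_pop,
    predStep_pop, runSeq_pop_congr hst]

lemma validSeq_pair_of_joins (hb₁ : Joins b₁ x w) (hb₂ : Joins b₂ y w) (hyx : y ≠ x)
    (hyw : y ≠ w) {t : PPState} (h₁ : b₁ ∈ t.arcs) (h₂ : b₂ ∈ t.arcs) (hx : 1 ≤ t.pop x)
    (hy : 1 ≤ t.pop y) (hw : 2 ≤ t.pop w) : ValidSeq t [b₁, b₂] := by
  have hyb₁ : ¬(y = b₁.1 ∨ y = b₁.2) := by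
    rw [hb₁.incident_iff]
    omega
  have hwb₁ : w = b₁.1 ∨ w = b₁.2 := (hb₁.incident_iff w).mpr (Or.inr rfl)
  have hb₂b₁ : b₂ ≠ b₁ := fun h => hyb₁ (h ▸ (hb₂.incident_iff y).mpr (Or.inl rfl))
  rw [validSeq_pair, hb₁.validArc_iff, hb₂.validArc_iff, predStep_pop, predStep_pop,
    if_neg hyb₁, if_pos hwb₁]
  exact ⟨⟨h₁, hx, by omega⟩, Finset.mem_erase.mpr ⟨hb₂b₁, h₂⟩, hy, by omega⟩

lemma validSeq_squeeze (hA : ∀ a ∈ A, a.1 ∈ Finset.Icc 1 n ∧ a.2 ∈ Finset.Icc 1 n)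
    (he : Joins e x y) (hxy : x ≠ y) (hb₁ : Joins b₁ x (n + 1)) (hb₂ : Joins b₂ y (n + 1))
    {l₁ l₂ : List (ℕ × ℕ)} (hv : ValidSeq (initState A) (l₁ ++ [e] ++ l₂)) :
    ValidSeq (initState (squeezeArcs A e b₁ b₂)) (l₁ ++ [b₁, b₂] ++ l₂) := by
  have hlA := hv.mem_arcs
  have hel₁ : e ∉ l₁ := fun h =>
    List.disjoint_of_nodup_append hv.nodup.of_append_left h (List.mem_singleton_self e)
  have hl₂ : ∀ a ∈ l₂, a ∉ l₁ ++ [e] := fun a ha h => List.disjoint_of_nodup_append hv.nodup h ha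
  have hb₁A := notMem_of_joins_succ hA hb₁
  have hb₂A := notMem_of_joins_succ hA hb₂
  obtain ⟨hx, hy⟩ := he.mem_and_mem_iff.mp (hA e (hlA e (by simp)))
  rw [Finset.mem_Icc] at hx hy
  rw [validSeq_append, validSeq_append] at hv ⊢
  obtain ⟨⟨hv₁, hve, -⟩, hv₂⟩ := hv
  rw [he.validArc_iff] at hve
  have hpop₁ : (runSeq (initState (squeezeArcs A e b₁ b₂)) l₁).pop =
      (runSeq (initState A) l₁).pop :=
    runSeq_pop_congr (s := initState (squeezeArcs A e b₁ b₂)) (t := initState A) rfl l₁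
  have hw : (runSeq (initState A) l₁).pop (n + 1) = n + 1 :=
    runSeq_pop_of_not_incident fun a ha => not_incident_succ_of_mem hA (hlA a (by simp [ha]))
  have hl₁ : ∀ b ∉ A, b ∈ squeezeArcs A e b₁ b₂ →
      b ∈ (runSeq (initState (squeezeArcs A e b₁ b₂)) l₁).arcs := fun b hbA hb => by
    rw [arcs_runSeq]
    exact Finset.mem_sdiff.mpr ⟨hb, fun h => hbA (hlA b (by simp [List.mem_toFinset.mp h]))⟩
  refine ⟨⟨?_, ?_⟩, hv₂.transfer (fun a ha => ?_)
    (fun a ha => hA a (hlA a (List.mem_append_right _ ha)))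
    ((runSeq_pop_squeeze (s := initState A) (t := initState (squeezeArcs A e b₁ b₂)) he hb₁ hb₂
      hxy (by omega) (by omega) rfl l₁).mono (Icc_subset_compl_succ n))⟩
  · exact hv₁.transfer (S := Set.univ) (fun a ha => mem_squeezeArcs.mpr (Or.inr (Or.inr
      ⟨ne_of_mem_of_not_mem ha hel₁, hlA a (by simp [ha])⟩))) (fun _ _ => ⟨trivial, trivial⟩)
      (fun _ _ => rfl)
  · refine validSeq_pair_of_joins hb₁ hb₂ (Ne.symm hxy) (by omega)
      (hl₁ b₁ hb₁A (mem_squeezeArcs.mpr (Or.inl rfl)))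
      (hl₁ b₂ hb₂A (mem_squeezeArcs.mpr (Or.inr (Or.inl rfl)))) ?_ ?_ ?_ <;>
      rw [hpop₁] <;> omega
  · have haA : a ∈ A := hlA a (List.mem_append_right _ ha)
    obtain ⟨hal₁, hae⟩ : a ∉ l₁ ∧ a ≠ e := by simpa using hl₂ a ha
    rw [arcs_runSeq]
    simp [initState, mem_squeezeArcs, haA, hae, hal₁, ne_of_mem_of_not_mem haA hb₁A,
      ne_of_mem_of_not_mem haA hb₂A]

theorem exists_squeezed_strategy_of_mem
    (hA : ∀ a ∈ A, a.1 ∈ Finset.Icc 1 n ∧ a.2 ∈ Finset.Icc 1 n)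
    (he : Joins e x y) (hxy : x ≠ y) (hb₁ : Joins b₁ x (n + 1)) (hb₂ : Joins b₂ y (n + 1))
    (hl : IsStrategy (initState A) l) (hel : e ∈ l) :
    ∃ l', IsStrategy (initState (squeezeArcs A e b₁ b₂)) l' ∧
      resid (n + 1) (runSeq (initState (squeezeArcs A e b₁ b₂)) l') =
        resid n (runSeq (initState A) l) + (n - 1) := by
  obtain ⟨l₁, l₂, rfl⟩ := List.append_of_mem hel
  rw [← List.singleton_append, ← List.append_assoc] at hl ⊢
  obtain ⟨hv, hterm⟩ := hl
  have hlA := hv.mem_arcs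
  have hlw : ∀ a ∈ l₁ ++ [e] ++ l₂, ¬(n + 1 = a.1 ∨ n + 1 = a.2) := fun a ha =>
    not_incident_succ_of_mem hA (hlA a ha)
  obtain ⟨hx, hy⟩ := he.mem_and_mem_iff.mp (hA e (hlA e (by simp)))
  rw [Finset.mem_Icc] at hx hy
  have hpop : Set.EqOn (runSeq (initState A) (l₁ ++ [e] ++ l₂)).pop
      (runSeq (initState (squeezeArcs A e b₁ b₂)) (l₁ ++ [b₁, b₂] ++ l₂)).pop
      ↑(Finset.Icc 1 n) := by
    rw [runSeq_append _ (l₁ ++ [e]), runSeq_append _ (l₁ ++ [b₁, b₂])]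
    exact (runSeq_pop_eqOn (runSeq_pop_squeeze (s := initState A)
      (t := initState (squeezeArcs A e b₁ b₂)) he hb₁ hb₂ hxy (by omega) (by omega) rfl l₁)
      l₂).mono (Icc_subset_compl_succ n)
  have hw : (runSeq (initState (squeezeArcs A e b₁ b₂)) (l₁ ++ [b₁, b₂] ++ l₂)).pop (n + 1) =
      n - 1 := by
    rw [runSeq_append, runSeq_pop_of_not_incident fun a ha => hlw a (by simp [ha]), runSeq_append]
    change (predStep (predStep _ b₁) b₂).pop (n + 1) = n - 1
    rw [predStep_predStep_pop he hb₁ hb₂ hxy (by omega) (by omega), Function.update_self,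
      runSeq_pop_of_not_incident fun a ha => hlw a (by simp [ha])]
    rfl
  have harcs : ∀ a ∈ (runSeq (initState (squeezeArcs A e b₁ b₂)) (l₁ ++ [b₁, b₂] ++ l₂)).arcs,
      a ∈ (runSeq (initState A) (l₁ ++ [e] ++ l₂)).arcs := by
    intro a ha
    simp only [arcs_runSeq, initState, mem_squeezeArcs, Finset.mem_sdiff, List.mem_toFinset,
      List.mem_append, List.mem_cons] at ha ⊢
    tauto
  refine ⟨l₁ ++ [b₁, b₂] ++ l₂, ⟨validSeq_squeeze hA he hxy hb₁ hb₂ hv,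
    hterm.of_eqOn harcs (fun a ha => ?_) hpop⟩, ?_⟩
  · have ha' := harcs a ha
    rw [arcs_runSeq] at ha'
    exact hA a (Finset.mem_sdiff.mp ha').1
  · rw [resid_succ, hw, resid_congr hpop]

theorem exists_squeezed_strategy_of_not_mem
    (hA : ∀ a ∈ A, a.1 ∈ Finset.Icc 1 n ∧ a.2 ∈ Finset.Icc 1 n)
    (hb₁ : Joins b₁ x (n + 1)) (hb₂ : Joins b₂ y (n + 1)) (hx : x ∈ Finset.Icc 1 n) (hy : y ≤ n)
    (hl : IsStrategy (initState A) l) (hel : e ∉ l)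
    (hpx : 1 ≤ (runSeq (initState A) l).pop x) (hpy : (runSeq (initState A) l).pop y = 0) :
    ∃ l', IsStrategy (initState (squeezeArcs A e b₁ b₂)) l' ∧
      resid (n + 1) (runSeq (initState (squeezeArcs A e b₁ b₂)) l') =
        resid n (runSeq (initState A) l) + (n - 1) := by
  obtain ⟨hv, hterm⟩ := hl
  have hlA := hv.mem_arcs
  have hv' : ValidSeq (initState (squeezeArcs A e b₁ b₂)) l :=
    hv.transfer (S := Set.univ) (fun a ha => mem_squeezeArcs.mpr (Or.inr (Or.inr
      ⟨ne_of_mem_of_not_mem ha hel, hlA a ha⟩))) (fun _ _ => ⟨trivial, trivial⟩) (fun _ _ => rfl)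
  set t := runSeq (initState A) l
  set t' := runSeq (initState (squeezeArcs A e b₁ b₂)) l
  have hpop : t'.pop = t.pop :=
    runSeq_pop_congr (s := initState (squeezeArcs A e b₁ b₂)) (t := initState A) rfl l
  have hw : t.pop (n + 1) = n + 1 :=
    runSeq_pop_of_not_incident fun a ha => not_incident_succ_of_mem hA (hlA a ha)
  have hb₁v : validArc t' b₁ := by
    rw [hb₁.validArc_iff, hpop, arcs_runSeq, hw]
    exact ⟨Finset.mem_sdiff.mpr ⟨mem_squeezeArcs.mpr (Or.inl rfl), fun h =>
      notMem_of_joins_succ hA hb₁ (hlA _ (List.mem_toFinset.mp h))⟩, hpx, by omega⟩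
  refine ⟨l ++ [b₁], ⟨(validSeq_append _ _ _).mpr ⟨hv', hb₁v, trivial⟩, ?_⟩, ?_⟩
  · rw [runSeq_append]
    change Terminal (predStep t' b₁)
    refine hterm.of_le (fun v => (predStep_pop_le t' b₁ v).trans_eq (congrFun hpop v))
      fun a ha haT hva => ?_
    change a ∈ t'.arcs.erase b₁ at ha
    simp only [t, t', arcs_runSeq, initState, mem_squeezeArcs, Finset.mem_erase,
      Finset.mem_sdiff, List.mem_toFinset] at ha haT
    obtain ⟨hab₁, (rfl | rfl | ⟨-, haA⟩), hal⟩ := ha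
    · exact hab₁ rfl
    · have hya : ¬(y = b₁.1 ∨ y = b₁.2) := by
        rw [hb₁.incident_iff]
        rintro (rfl | rfl) <;> omega
      rw [hb₂.validArc_iff, predStep_pop, if_neg hya, hpop, hpy] at hva
      exact absurd hva.2.1 (by omega)
    · exact haT ⟨haA, hal⟩
  · have hres := resid_predStep_add_one hb₁ hx (by simp) (hpx.trans_eq (congrFun hpop x).symm)
    rw [resid_congr (fun v _ => congrFun hpop v)] at hres
    rw [runSeq_append, resid_succ]
    change resid n (predStep t' b₁) + (predStep t' b₁).pop (n + 1) = _
    rw [predStep_pop, if_pos ((hb₁.incident_iff _).mpr (Or.inr rfl)), hpop, hw]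
    have := Finset.mem_Icc.mp hx
    omega

end Squeeze

lemma Nat.eq_of_succ_mod_eq {n i k : ℕ} (hi : i < n) (hk : k < n) (h : (i + 1) % n = (k + 1) % n) :
    i = k :=
  (Nat.ModEq.add_right_cancel' 1 h).eq_of_lt_of_lt hi hk

namespace CycleOrientation

variable {n : ℕ} {p : ℕ → ℕ} {A : Finset (ℕ × ℕ)} {a b e : ℕ × ℕ} {x y : ℕ}

lemma exists_joins (h : CycleOrientation n p A) (ha : a ∈ A) :
    ∃ i < n, Joins a (p i) (p ((i + 1) % n)) :=
  h.2.2 a ha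

lemma mem_Icc (h : CycleOrientation n p A) (ha : a ∈ A) :
    a.1 ∈ Finset.Icc 1 n ∧ a.2 ∈ Finset.Icc 1 n := by
  obtain ⟨i, hi, hai⟩ := h.exists_joins ha
  exact (Joins.mem_and_mem_iff hai).mpr ⟨Finset.mem_Icc.mpr (h.1.mapsTo hi),
    Finset.mem_Icc.mpr (h.1.mapsTo (Nat.mod_lt _ (by omega)))⟩

lemma ne_of_joins (h : CycleOrientation n p A) (hn : 2 ≤ n) (he : e ∈ A) (hexy : Joins e x y) :
    x ≠ y := by
  obtain ⟨i, hi, hei⟩ := h.exists_joins he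
  have hsucc : i ≠ (i + 1) % n := by
    rcases Nat.lt_or_ge (i + 1) n with hlt | hge
    · rw [Nat.mod_eq_of_lt hlt]
      omega
    · rw [show i + 1 = n by omega, Nat.mod_self]
      omega
  have hp : p i ≠ p ((i + 1) % n) := fun hp => hsucc (h.1.injOn hi (Nat.mod_lt _ (by omega)) hp)
  rcases hexy with rfl | rfl <;> rcases hei with hei | hei <;>
    simp only [Prod.mk.injEq] at hei <;> omega

lemma eq_of_joins (h : CycleOrientation n p A) {i : ℕ} (hi : i < n) (ha : a ∈ A) (hb : b ∈ A)
    (hai : Joins a (p i) (p ((i + 1) % n))) (hbi : Joins b (p i) (p ((i + 1) % n))) : a = b := by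
  have := (h.2.1 i hi).2
  rcases hai with rfl | rfl <;> rcases hbi with rfl | rfl
  · rfl
  · exact absurd ⟨ha, hb⟩ this
  · exact absurd ⟨hb, ha⟩ this
  · rfl

lemma exists_pos_of_incident (h : CycleOrientation n p A) {j : ℕ} (hj : j < n) (ha : a ∈ A)
    (hxa : p j = a.1 ∨ p j = a.2) :
    ∃ i < n, Joins a (p i) (p ((i + 1) % n)) ∧ (i = j ∨ (i + 1) % n = j) := by
  obtain ⟨i, hi, hai⟩ := h.exists_joins ha
  refine ⟨i, hi, hai, ?_⟩
  rcases (hai.incident_iff _).mp hxa with hx | hx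
  · exact Or.inl (h.1.injOn hi hj hx.symm)
  · exact Or.inr (h.1.injOn (Nat.mod_lt _ (by omega)) hj hx.symm)

lemma eq_of_incident (h : CycleOrientation n p A) (he : e ∈ A) (ha : a ∈ A) (hb : b ∈ A)
    (hae : a ≠ e) (hbe : b ≠ e) (hxe : x = e.1 ∨ x = e.2) (hxa : x = a.1 ∨ x = a.2)
    (hxb : x = b.1 ∨ x = b.2) : a = b := by
  obtain ⟨j, hj, rfl⟩ : ∃ j < n, x = p j := by
    obtain ⟨i, hi, hei⟩ := h.exists_joins he
    rcases (hei.incident_iff x).mp hxe with hx | hx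
    exacts [⟨i, hi, hx⟩, ⟨_, Nat.mod_lt _ (by omega), hx⟩]
  obtain ⟨ia, hia, hai, hja⟩ := h.exists_pos_of_incident hj ha hxa
  obtain ⟨ib, hib, hbi, hjb⟩ := h.exists_pos_of_incident hj hb hxb
  obtain ⟨ie, hie, hei, hje⟩ := h.exists_pos_of_incident hj he hxe
  have hne : ∀ c ∈ A, ∀ i < n, Joins c (p i) (p ((i + 1) % n)) → c ≠ e →
      i ≠ ie ∧ (i + 1) % n ≠ (ie + 1) % n := fun c hc i hi hci hce =>
    have hi_ie : i ≠ ie := fun hii => hce (h.eq_of_joins hi hc he hci (hii ▸ hei))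
    ⟨hi_ie, fun hs => hi_ie (Nat.eq_of_succ_mod_eq hi hie hs)⟩
  have ha' := hne a ha ia hia hai hae
  have hb' := hne b hb ib hib hbi hbe
  -- The arcs at `p j` sit at position `j` or at its cyclic predecessor, and `a`, `b` both avoid
  -- the position of `e`.
  suffices ia = ib from h.eq_of_joins hia ha hb hai (this ▸ hbi)
  by_contra hab
  have hsab : (ia + 1) % n ≠ (ib + 1) % n := fun hs => hab (Nat.eq_of_succ_mod_eq hia hib hs)
  omega

lemma countP_incident_le_one (h : CycleOrientation n p A) (he : e ∈ A) (hxe : x = e.1 ∨ x = e.2)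
    {l : List (ℕ × ℕ)} (hl : ValidSeq (initState A) l) (hel : e ∉ l) :
    l.countP (fun a => x = a.1 ∨ x = a.2) ≤ 1 := by
  rw [List.countP_eq_length_filter, ← List.toFinset_card_of_nodup (hl.nodup.filter _)]
  refine Finset.card_le_one.mpr fun a ha b hb => ?_
  simp only [List.mem_toFinset, List.mem_filter, decide_eq_true_eq] at ha hb
  exact h.eq_of_incident he (hl.mem_arcs a ha.1) (hl.mem_arcs b hb.1)
    (ne_of_mem_of_not_mem ha.1 hel) (ne_of_mem_of_not_mem hb.1 hel) hxe ha.2 hb.2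

lemma pop_runSeq_of_not_mem (h : CycleOrientation n p A) (hn : 2 ≤ n) (he : e ∈ A)
    (hexy : Joins e x y) {l : List (ℕ × ℕ)} (hl : IsStrategy (initState A) l) (hel : e ∉ l) :
    (1 ≤ (runSeq (initState A) l).pop x ∧ (runSeq (initState A) l).pop y = 0) ∨
      ((runSeq (initState A) l).pop x = 0 ∧ 1 ≤ (runSeq (initState A) l).pop y) := by
  obtain ⟨hv, hterm⟩ := hl
  have heT : e ∈ (runSeq (initState A) l).arcs := by
    rw [arcs_runSeq]
    exact Finset.mem_sdiff.mpr ⟨he, List.mem_toFinset.not.mpr hel⟩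
  have hdead : ¬(1 ≤ (runSeq (initState A) l).pop x ∧ 1 ≤ (runSeq (initState A) l).pop y) :=
    fun hxy => hterm e heT ((hexy.validArc_iff _).mpr ⟨heT, hxy⟩)
  have hcx := h.countP_incident_le_one he ((hexy.incident_iff x).mpr (Or.inl rfl)) hv hel
  have hcy := h.countP_incident_le_one he ((hexy.incident_iff y).mpr (Or.inr rfl)) hv hel
  have hpx : _ = x := pop_runSeq_add_countP hv x
  have hpy : _ = y := pop_runSeq_add_countP hv y
  have hxy := h.ne_of_joins hn he hexy
  obtain ⟨hx, hy⟩ := hexy.mem_and_mem_iff.mp (h.mem_Icc he)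
  rw [Finset.mem_Icc] at hx hy
  omega

end CycleOrientation

theorem cycle_extension_by_squeezing_general (n : ℕ) (hn : 3 ≤ n) (p : ℕ → ℕ)
    (A : Finset (ℕ × ℕ)) (hcyc : CycleOrientation n p A)
    (vp vq : ℕ)
    (e : ℕ × ℕ) (he : e ∈ A) (hedir : e = (vp, vq) ∨ e = (vq, vp))
    (a₁ a₂ : ℕ × ℕ)
    (ha₁ : a₁ = (vp, n + 1) ∨ a₁ = (n + 1, vp))
    (ha₂ : a₂ = (n + 1, vq) ∨ a₂ = (vq, n + 1))
    (l : List (ℕ × ℕ)) (hl : IsStrategy (initState A) l) :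
    ∃ l' : List (ℕ × ℕ), IsStrategy (initState (insert a₁ (insert a₂ (A.erase e)))) l' ∧
      resid (n + 1) (runSeq (initState (insert a₁ (insert a₂ (A.erase e)))) l') =
        resid n (runSeq (initState A) l) + (n - 1) := by
  have hA : ∀ a ∈ A, a.1 ∈ Finset.Icc 1 n ∧ a.2 ∈ Finset.Icc 1 n := fun a ha => hcyc.mem_Icc ha
  have hb₂ : Joins a₂ vq (n + 1) := ha₂.symm
  obtain ⟨hp, hq⟩ := Joins.mem_and_mem_iff hedir |>.mp (hA e he)
  by_cases hel : e ∈ l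
  · exact exists_squeezed_strategy_of_mem hA hedir (hcyc.ne_of_joins (by omega) he hedir) ha₁ hb₂
      hl hel
  rcases hcyc.pop_runSeq_of_not_mem (by omega) he hedir hl hel with ⟨hpp, hpq⟩ | ⟨hpp, hpq⟩
  · exact exists_squeezed_strategy_of_not_mem hA ha₁ hb₂ hp (Finset.mem_Icc.mp hq).2 hl hel hpp hpq
  · rw [Finset.insert_comm]
    exact exists_squeezed_strategy_of_not_mem hA hb₂ ha₁ hq (Finset.mem_Icc.mp hp).2 hl hel hpq hpp

/-- Let `n ≥ 3`, let `A` be an orientation of the cycle `C_n` (vertices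
labelled bijectively by `v_1, …, v_n` via `p`), let `v_p, v_q` be two adjacent vertices of
the cycle joined by the arc `e ∈ A`, and let `l` be a predator-prey strategy on
`D = (A, ρ)`. If `A'` is obtained from `A` by squeezing in a new vertex `v_{n+1}`,
replacing `e` by an arc joining `v_p` and `v_{n+1}` and an arc joining `v_{n+1}` and `v_q`
(each in either direction), then there is a predator-prey strategy on `D' = (A', ρ)` whose
residual population equals `r_l(D) + (n - 1)`. -/
theorem cycle_extension_by_squeezing (n : ℕ) (hn : 3 ≤ n) (p : ℕ → ℕ)
    (A : Finset (ℕ × ℕ)) (hcyc : CycleOrientation n p A)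
    (vp vq : ℕ)
    (hadj : ∃ i < n, (vp = p i ∧ vq = p ((i + 1) % n)) ∨ (vp = p ((i + 1) % n) ∧ vq = p i))
    (e : ℕ × ℕ) (he : e ∈ A) (hedir : e = (vp, vq) ∨ e = (vq, vp))
    (a₁ a₂ : ℕ × ℕ)
    (ha₁ : a₁ = (vp, n + 1) ∨ a₁ = (n + 1, vp))
    (ha₂ : a₂ = (n + 1, vq) ∨ a₂ = (vq, n + 1))
    (l : List (ℕ × ℕ)) (hl : IsStrategy (initState A) l) :
    ∃ l' : List (ℕ × ℕ), IsStrategy (initState (insert a₁ (insert a₂ (A.erase e)))) l' ∧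
      resid (n + 1) (runSeq (initState (insert a₁ (insert a₂ (A.erase e)))) l') =
        resid n (runSeq (initState A) l) + (n - 1) :=
  cycle_extension_by_squeezing_general n hn p A hcyc vp vq e he hedir a₁ a₂ ha₁ ha₂ l hl
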